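/- For every n ≥ 2, the wedge sawtooth alternation of length 3n is not simple: the permutation σ of length 3n defined by σ(3i−2) = n + 2i, σ(3i−1) = n + 1 − i, σ(3i) = n + 2i − 1 for 1 ≤ i ≤ n has a proper nontrivial interval. -/
import Mathlib


/-- `I` is an interval of the permutation `π`: a nonempty set of positions that is
contiguous and whose image under `π` is contiguous. -/
def IsPermInterval {n : ℕ} (π : Equiv.Perm (Fin n)) (I : Set (Fin n)) : Prop :=
  I.Nonempty ∧
  (∀ a b e : Fin n, a ∈ I → b ∈ I → a ≤ e → e ≤ b → e ∈ I) ∧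
  (∀ a b e : Fin n, a ∈ I → b ∈ I → π a ≤ π e → π e ≤ π b → e ∈ I)

/-- The wedge sawtooth alternation of length `3n` (for `n ≥ 2`) is not simple:
it has a proper nontrivial interval. In 0-indexed form, for `0 ≤ t < n`:
`σ(3t) = n + 2t + 1`, `σ(3t+1) = n − 1 − t`, `σ(3t+2) = n + 2t`
(corresponding to the 1-indexed definition `σ(3i−2) = n + 2i`,
`σ(3i−1) = n + 1 − i`, `σ(3i) = n + 2i − 1`). -/
theorem stmt6 {n : ℕ} (hn : 2 ≤ n) (σ : Equiv.Perm (Fin (3 * n)))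
    (hσ : ∀ t : ℕ, ∀ ht : t < n,
      (σ ⟨3 * t, by omega⟩ : ℕ) = n + 2 * t + 1 ∧
      (σ ⟨3 * t + 1, by omega⟩ : ℕ) = n - 1 - t ∧
      (σ ⟨3 * t + 2, by omega⟩ : ℕ) = n + 2 * t) :
    ∃ I : Set (Fin (3 * n)), IsPermInterval σ I ∧ I ≠ Set.univ ∧ ¬ ∃ x, I = {x} := by
  have h3n : 3 ≤ 3 * n := by omega
  -- values of σ on arbitrary positions, by decomposition
  have key : ∀ e : Fin (3 * n), (e : ℕ) < 3 ↔ (n - 1 ≤ (σ e : ℕ) ∧ (σ e : ℕ) ≤ n + 1) := by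
    intro e
    set t := (e : ℕ) / 3 with htdef
    have ht : t < n := by omega
    obtain ⟨h0, h1, h2⟩ := hσ t ht
    have hr : (e : ℕ) % 3 = 0 ∨ (e : ℕ) % 3 = 1 ∨ (e : ℕ) % 3 = 2 := by omega
    rcases hr with hr | hr | hr
    · have he : e = ⟨3 * t, by omega⟩ := Fin.ext (by simp only [Fin.val_mk]; omega)
      have hσe : (σ e : ℕ) = n + 2 * t + 1 := by rw [he]; exact h0
      rw [hσe]
      omega
    · have he : e = ⟨3 * t + 1, by omega⟩ := Fin.ext (by simp only [Fin.val_mk]; omega)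
      have hσe : (σ e : ℕ) = n - 1 - t := by rw [he]; exact h1
      rw [hσe]
      omega
    · have he : e = ⟨3 * t + 2, by omega⟩ := Fin.ext (by simp only [Fin.val_mk]; omega)
      have hσe : (σ e : ℕ) = n + 2 * t := by rw [he]; exact h2
      rw [hσe]
      omega
  refine ⟨{x | (x : ℕ) < 3}, ⟨⟨⟨0, by omega⟩, by simp⟩, ?_, ?_⟩, ?_, ?_⟩
  · intro a b e ha hb hae heb
    simp only [Set.mem_setOf_eq] at *
    exact lt_of_le_of_lt heb hb
  · intro a b e ha hb hae heb
    simp only [Set.mem_setOf_eq] at *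
    rw [key]
    have hka := (key a).mp ha
    have hkb := (key b).mp hb
    have h1 : (σ a : ℕ) ≤ (σ e : ℕ) := hae
    have h2 : (σ e : ℕ) ≤ (σ b : ℕ) := heb
    omega
  · intro h
    have : (⟨3, by omega⟩ : Fin (3 * n)) ∈ ({x : Fin (3 * n) | (x : ℕ) < 3}) := by
      rw [h]; trivial
    simp at this
  · rintro ⟨x, hx⟩
    have h0 : (⟨0, by omega⟩ : Fin (3 * n)) ∈ ({x : Fin (3 * n) | (x : ℕ) < 3}) := by simp
    have h1 : (⟨1, by omega⟩ : Fin (3 * n)) ∈ ({x : Fin (3 * n) | (x : ℕ) < 3}) := by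
      simp
    rw [hx] at h0 h1
    simp only [Set.mem_singleton_iff] at h0 h1
    exact absurd (congrArg Fin.val (h0.trans h1.symm)) (by simp)
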